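/- arXiv:1903.04140 — 4 statements merged into one kernel-verified Lean document; each statement's English description precedes it below -/
import Mathlib

section
/- For all w1, w2 ∈ ℌ, one has (x+y)w1 ◇ w2 = w1 ◇ (x+y)w2 = (x+y)(w1 ◇ w2). -/
open scoped BigOperators

noncomputable section

/-- `ℌ = ℚ⟨x,y⟩`, the free noncommutative polynomial ring in two indeterminates,
realized as the free `ℚ`-algebra on `Bool` (`false ↦ x`, `true ↦ y`). -/
abbrev H : Type := FreeAlgebra ℚ Bool

/-- The indeterminate `x`. -/
def Hx : H := FreeAlgebra.ι ℚ false

/-- The indeterminate `y`. -/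
def Hy : H := FreeAlgebra.ι ℚ true

/-- The multiple zeta value `ζ(k₁,…,k_r) = ∑_{0<n₁<⋯<n_r} 1/(n₁^{k₁}⋯n_r^{k_r})`. -/
def MZV (r : ℕ) (k : Fin r → ℕ) : ℝ :=
  ∑' n : {n : Fin r → ℕ // (∀ i, 0 < n i) ∧ StrictMono n},
    ∏ i, (1 : ℝ) / (n.1 i : ℝ) ^ (k i)

/-- `Z : yℌx → ℝ` is the `ℚ`-linear map with `Z(y x^{k₁-1} ⋯ y x^{k_r-1}) = ζ(k₁,…,k_r)`.
We encode it as a `ℚ`-linear map on all of `ℌ` whose values on the basis monomials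
`y x^{k₁-1} ⋯ y x^{k_r-1}` (with `k_r ≥ 2`) of `yℌx` are the multiple zeta values;
these values determine `Z` uniquely on the subspace `yℌx`. -/
def IsZetaMap (Z : H →ₗ[ℚ] ℝ) : Prop :=
  ∀ (r : ℕ) (k : Fin (r + 1) → ℕ), (∀ i, 1 ≤ k i) → 2 ≤ k (Fin.last r) →
    Z ((List.ofFn fun i => Hy * Hx ^ (k i - 1)).prod) = MZV (r + 1) k

/-- The family `f(A,B) = (Z(A(x+y)^s B))_{s ≥ 0}`. -/
def fam (Z : H →ₗ[ℚ] ℝ) (A B : H) : ℕ → ℝ := fun s => Z (A * (Hx + Hy) ^ s * B)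

/-- The `ℚ`-bilinear product `◇` on `ℌ`, characterized by its recursive defining
properties (which determine it uniquely). -/
def IsDiamond (d : H →ₗ[ℚ] H →ₗ[ℚ] H) : Prop :=
  (∀ w, d w 1 = w) ∧ (∀ w, d 1 w = w) ∧
  (∀ w1 w2, d (Hx * w1) (Hx * w2) = Hx * d w1 (Hx * w2) - Hx * d (Hy * w1) w2) ∧
  (∀ w1 w2, d (Hx * w1) (Hy * w2) = Hx * d w1 (Hy * w2) + Hy * d (Hx * w1) w2) ∧
  (∀ w1 w2, d (Hy * w1) (Hx * w2) = Hy * d w1 (Hx * w2) + Hx * d (Hy * w1) w2) ∧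
  (∀ w1 w2, d (Hy * w1) (Hy * w2) = Hy * d w1 (Hy * w2) - Hy * d (Hx * w1) w2)

/-- The harmonic product `∗` on `ℌ`, characterized by its recursive defining
properties (which determine it uniquely). -/
def IsHarmonic (st : H →ₗ[ℚ] H →ₗ[ℚ] H) : Prop :=
  (∀ w, st w 1 = w) ∧ (∀ w, st 1 w = w) ∧
  (∀ w1 w2, st (Hx * w1) w2 = Hx * st w1 w2) ∧
  (∀ w1 w2, st w1 (Hx * w2) = Hx * st w1 w2) ∧
  (∀ w1 w2, st (Hy * w1) (Hy * w2) = Hy * (st w1 (Hy * w2) + st (Hy * w1) w2 + Hx * st w1 w2))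

/-- The anti-automorphism `τ` of `ℌ` interchanging `x` and `y`, characterized by
being `ℚ`-linear, anti-multiplicative, unital, and swapping the generators. -/
def IsTau (t : H →ₗ[ℚ] H) : Prop :=
  t 1 = 1 ∧ (∀ a b, t (a * b) = t b * t a) ∧ t Hx = Hy ∧ t Hy = Hx

/-- The automorphism `φ` of `ℌ` with `φ(x) = x + y` and `φ(y) = -y`. -/
def phi : H →ₐ[ℚ] H := FreeAlgebra.lift ℚ (fun b => if b then -Hy else Hx + Hy)

/-- The automorphism `S₁` of `ℌ` with `S₁(x) = x` and `S₁(y) = x + y`. -/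
def S1 : H →ₐ[ℚ] H := FreeAlgebra.lift ℚ (fun b => if b then Hx + Hy else Hx)

/-- The Dirichlet series `∑_{n ≥ 1} a_n / n^s` (with `a n` the coefficient indexed by
`n + 1`) converges to `L` at `s`, i.e. its partial sums tend to `L`. -/
def DSConv (a : ℕ → ℝ) (s : ℕ) (L : ℝ) : Prop :=
  Filter.Tendsto (fun N => ∑ n ∈ Finset.range N, a n / ((n : ℝ) + 1) ^ s)
    Filter.atTop (nhds L)


/-! Both sides are linear in the word that is peeled letter by letter. For `(x+y)w₁ ◇ w₂` only the
first letter of `w₂` matters: the terms `∓x(yw₁ ◇ u)` of the `x`- and `y`-rules cancel. The identity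
`w₁ ◇ (x+y)w₂ = (x+y)(w₁ ◇ w₂)` then follows by induction on `w₁`, the first one being used to
recombine `xt ◇ w₂ + yt ◇ w₂ = (x+y)(t ◇ w₂)`. -/

namespace FreeAlgebra

theorem induction_ι_mul {R X : Type*} [CommSemiring R] {P : FreeAlgebra R X → Prop}
    (one : P 1) (ι_mul : ∀ x w, P w → P (ι R x * w))
    (add : ∀ a b, P a → P b → P (a + b)) (smul : ∀ (r : R) a, P a → P (r • a))
    (a : FreeAlgebra R X) : P a := by
  suffices h : ∀ w, P w → P (a * w) by simpa using h 1 one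
  induction a using FreeAlgebra.induction with
  | grade0 r => intro w hw; rw [← Algebra.smul_def]; exact smul r w hw
  | grade1 x => exact ι_mul x
  | add a b ha hb => intro w hw; rw [add_mul]; exact add _ _ (ha w hw) (hb w hw)
  | mul a b ha hb => intro w hw; rw [mul_assoc]; exact ha _ (hb w hw)

end FreeAlgebra

theorem H.induction_left {P : H → Prop} (one : P 1)
    (x_mul : ∀ w, P w → P (Hx * w)) (y_mul : ∀ w, P w → P (Hy * w))
    (add : ∀ a b, P a → P b → P (a + b)) (smul : ∀ (r : ℚ) a, P a → P (r • a)) (a : H) : P a :=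
  FreeAlgebra.induction_ι_mul one (fun b => b.rec x_mul y_mul) add smul a

namespace IsDiamond

variable {d : H →ₗ[ℚ] H →ₗ[ℚ] H}

theorem xy_mul_left (hd : IsDiamond d) (w1 w2 : H) :
    d ((Hx + Hy) * w1) w2 = (Hx + Hy) * d w1 w2 := by
  obtain ⟨right_one, -, hxx, hxy, hyx, hyy⟩ := hd
  induction w2 using H.induction_left generalizing w1 with
  | one => simp only [right_one]
  | x_mul u _ => rw [add_mul, map_add, LinearMap.add_apply, hxx, hyx, add_mul]; abel
  | y_mul u _ => rw [add_mul, map_add, LinearMap.add_apply, hxy, hyy, add_mul]; abel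
  | add a b ha hb => simp only [map_add, ha, hb, mul_add]
  | smul r a ha => simp only [map_smul, ha, mul_smul_comm]

theorem xy_mul_right (hd : IsDiamond d) (w1 w2 : H) :
    d w1 ((Hx + Hy) * w2) = (Hx + Hy) * d w1 w2 := by
  have split_left (t : H) : d (Hx * t) w2 + d (Hy * t) w2 = (Hx + Hy) * d t w2 := by
    rw [← LinearMap.add_apply, ← map_add, ← add_mul, hd.xy_mul_left]
  obtain ⟨-, one_left, hxx, hxy, hyx, hyy⟩ := hd
  induction w1 using H.induction_left with
  | one => simp only [one_left]
  | x_mul t ih =>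
    have split_right : d t (Hx * w2) + d t (Hy * w2) = (Hx + Hy) * d t w2 := by
      rw [← map_add, ← add_mul, ih]
    calc d (Hx * t) ((Hx + Hy) * w2)
        = Hx * (d t (Hx * w2) + d t (Hy * w2)) - Hx * d (Hy * t) w2 + Hy * d (Hx * t) w2 := by
          rw [add_mul, map_add, hxx, hxy, mul_add]; abel
      _ = (Hx + Hy) * d (Hx * t) w2 := by
          rw [split_right, ← split_left, mul_add, add_mul]; abel
  | y_mul t ih =>
    have split_right : d t (Hx * w2) + d t (Hy * w2) = (Hx + Hy) * d t w2 := by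
      rw [← map_add, ← add_mul, ih]
    calc d (Hy * t) ((Hx + Hy) * w2)
        = Hy * (d t (Hx * w2) + d t (Hy * w2)) + Hx * d (Hy * t) w2 - Hy * d (Hx * t) w2 := by
          rw [add_mul, map_add, hyx, hyy, mul_add]; abel
      _ = (Hx + Hy) * d (Hy * t) w2 := by
          rw [split_right, ← split_left, mul_add, add_mul]; abel
  | add a b ha hb => simp only [map_add, LinearMap.add_apply, ha, hb, mul_add]
  | smul r a ha => simp only [map_smul, LinearMap.smul_apply, ha, mul_smul_comm]

end IsDiamond

/-- For all `w₁, w₂ ∈ ℌ`,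
`(x+y)w₁ ◇ w₂ = w₁ ◇ (x+y)w₂ = (x+y)(w₁ ◇ w₂)`. -/
theorem statement5 (d : H →ₗ[ℚ] H →ₗ[ℚ] H) (hd : IsDiamond d) (w1 w2 : H) :
    d ((Hx + Hy) * w1) w2 = d w1 ((Hx + Hy) * w2) ∧
    d ((Hx + Hy) * w1) w2 = (Hx + Hy) * d w1 w2 := by
  have hA := hd.xy_mul_left w1 w2
  exact ⟨hA.trans (hd.xy_mul_right w1 w2).symm, hA⟩

end
end

section
/- For all w1, w2 ∈ ℌ, one has φ(w1 ∗ w2) = φ(w1) ◇ φ(w2). -/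
open scoped BigOperators

noncomputable section

/-! Since `φ(x) = x + y`, everything rests on the identities
`(x+y)a ◇ b = (x+y)(a ◇ b) = a ◇ (x+y)b`: the first comes from adding the recursion rules of `◇`
for the leading letters `x` and `y`, the second from the first by induction on `a`. They carry the `x`-rules of `∗` over to `◇`, and with `φ(y) = -y`
the `yy`-rule of `∗` becomes the `yy`-rule of `◇`. Both sides are bilinear, so an induction on
words, first in `w₁` and then in `w₂`, concludes. -/

theorem FreeAlgebra.induction_on_ι_mul {R X : Type*} [CommSemiring R]
    {p : FreeAlgebra R X → Prop} (one : p 1) (ι_mul : ∀ x w, p w → p (ι R x * w))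
    (add : ∀ u v, p u → p v → p (u + v)) (smul : ∀ (r : R) w, p w → p (r • w))
    (w : FreeAlgebra R X) : p w := by
  suffices h : ∀ a w, p w → p (a * w) by simpa using h w 1 one
  intro a
  induction a using FreeAlgebra.induction with
  | grade0 r => intro w hw; rw [← Algebra.smul_def]; exact smul r w hw
  | grade1 x => exact ι_mul x
  | mul a b ha hb => intro w hw; rw [mul_assoc]; exact ha _ (hb w hw)
  | add a b ha hb => intro w hw; rw [add_mul]; exact add _ _ (ha w hw) (hb w hw)

theorem H.induction_on {p : H → Prop} (one : p 1) (x_mul : ∀ w, p w → p (Hx * w))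
    (y_mul : ∀ w, p w → p (Hy * w)) (add : ∀ u v, p u → p v → p (u + v))
    (smul : ∀ (q : ℚ) w, p w → p (q • w)) (w : H) : p w :=
  FreeAlgebra.induction_on_ι_mul one (fun b => b.rec x_mul y_mul) add smul w

theorem phi_Hx_mul (w : H) : phi (Hx * w) = (Hx + Hy) * phi w := by
  simp [phi, Hx, Hy]

theorem phi_Hy_mul (w : H) : phi (Hy * w) = -(Hy * phi w) := by
  simp [phi, Hy]

namespace IsDiamond

variable {d : H →ₗ[ℚ] H →ₗ[ℚ] H} (hd : IsDiamond d)
include hd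

theorem x_add_y_mul_left (a b : H) : d ((Hx + Hy) * a) b = (Hx + Hy) * d a b := by
  obtain ⟨h1, -, hxx, hxy, hyx, hyy⟩ := hd
  induction b using H.induction_on with
  | one => rw [h1, h1]
  | x_mul b _ => rw [add_mul, map_add, LinearMap.add_apply, hxx, hyx]; noncomm_ring
  | y_mul b _ => rw [add_mul, map_add, LinearMap.add_apply, hxy, hyy]; noncomm_ring
  | add u v hu hv => rw [map_add, map_add, hu, hv, mul_add]
  | smul q u hu => rw [map_smul, map_smul, hu, mul_smul_comm]

theorem x_mul_add_y_mul_left (a b : H) :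
    d (Hx * a) b + d (Hy * a) b = (Hx + Hy) * d a b := by
  rw [← LinearMap.add_apply, ← map_add, ← add_mul, hd.x_add_y_mul_left]

theorem x_add_y_mul_right (a b : H) : d a ((Hx + Hy) * b) = (Hx + Hy) * d a b := by
  have ⟨_, h1, hxx, hxy, hyx, hyy⟩ := hd
  induction a using H.induction_on generalizing b with
  | one => rw [h1, h1]
  | x_mul a ih =>
    calc d (Hx * a) ((Hx + Hy) * b)
        = Hx * d a ((Hx + Hy) * b) - Hx * d (Hy * a) b + Hy * d (Hx * a) b := by
          rw [add_mul, map_add, map_add, hxx, hxy]; noncomm_ring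
      _ = (Hx + Hy) * d (Hx * a) b := by rw [ih, ← hd.x_mul_add_y_mul_left]; noncomm_ring
  | y_mul a ih =>
    calc d (Hy * a) ((Hx + Hy) * b)
        = Hy * d a ((Hx + Hy) * b) + Hx * d (Hy * a) b - Hy * d (Hx * a) b := by
          rw [add_mul, map_add, map_add, hyx, hyy]; noncomm_ring
      _ = (Hx + Hy) * d (Hy * a) b := by rw [ih, ← hd.x_mul_add_y_mul_left]; noncomm_ring
  | add u v hu hv => rw [map_add, LinearMap.add_apply, LinearMap.add_apply, hu, hv, mul_add]
  | smul q u hu => rw [map_smul, LinearMap.smul_apply, LinearMap.smul_apply, hu, mul_smul_comm]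

end IsDiamond

theorem phi_harmonic_Hy_mul_left {st d : H →ₗ[ℚ] H →ₗ[ℚ] H} (hst : IsHarmonic st)
    (hd : IsDiamond d) {w1 : H} (ih : ∀ w2, phi (st w1 w2) = d (phi w1) (phi w2)) (w2 : H) :
    phi (st (Hy * w1) w2) = d (phi (Hy * w1)) (phi w2) := by
  induction w2 using H.induction_on with
  | one => rw [hst.1, map_one, hd.1]
  | x_mul w2 ih2 => rw [hst.2.2.2.1, phi_Hx_mul, phi_Hx_mul, ih2, hd.x_add_y_mul_right]
  | y_mul w2 ih2 =>
    rw [hst.2.2.2.2, phi_Hy_mul, map_add, map_add, phi_Hx_mul, ih, ih, ih2, phi_Hy_mul,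
      phi_Hy_mul]
    simp only [map_neg, LinearMap.neg_apply, neg_neg]
    rw [hd.2.2.2.2.2, ← hd.x_mul_add_y_mul_left]
    noncomm_ring
  | add u v hu hv => simp only [map_add, hu, hv]
  | smul q u hu => simp only [map_smul, hu]

/-- For all `w₁, w₂ ∈ ℌ`, `φ(w₁ ∗ w₂) = φ(w₁) ◇ φ(w₂)`. -/
theorem statement6 (st : H →ₗ[ℚ] H →ₗ[ℚ] H) (hst : IsHarmonic st)
    (d : H →ₗ[ℚ] H →ₗ[ℚ] H) (hd : IsDiamond d) (w1 w2 : H) :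
    phi (st w1 w2) = d (phi w1) (phi w2) := by
  induction w1 using H.induction_on generalizing w2 with
  | one => rw [hst.2.1, map_one, hd.2.1]
  | x_mul w1 ih => rw [hst.2.2.1, phi_Hx_mul, phi_Hx_mul, ih, hd.x_add_y_mul_left]
  | y_mul w1 ih => exact phi_harmonic_Hy_mul_left hst hd ih w2
  | add u v hu hv => simp only [map_add, LinearMap.add_apply, hu, hv]
  | smul q u hu => simp only [map_smul, LinearMap.smul_apply, hu]

end
end

section
/- The product ◇ on ℌ is associative and commutative: for all w1, w2, w3 ∈ ℌ, (w1 ◇ w2) ◇ w3 = w1 ◇ (w2 ◇ w3) and w1 ◇ w2 = w2 ◇ w1. -/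
open scoped BigOperators

noncomputable section

/-!
In the letters `z = x + y` and `y`, whose monomials span `ℌ`, the defining relations of `◇` become
`zA ◇ B = z (A ◇ B) = A ◇ zB` and `yA ◇ yB = y (A ◇ yB + yA ◇ B - z (A ◇ B))`:
a quasi-shuffle recursion in which `z` behaves like a scalar. Commutativity and associativity on
monomials then follow by induction on the words, as for quasi-shuffle products, and extend to `ℌ`
by multilinearity.
-/

def Hz : H := Hx + Hy

def zyWord (l : List Bool) : H := (l.map fun b => if b then Hy else Hz).prod

@[simp] lemma zyWord_nil : zyWord [] = 1 := rfl

@[simp] lemma zyWord_cons_true (l : List Bool) : zyWord (true :: l) = Hy * zyWord l := rfl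

@[simp] lemma zyWord_cons_false (l : List Bool) : zyWord (false :: l) = Hz * zyWord l := rfl

lemma zyWord_append (l l' : List Bool) : zyWord (l ++ l') = zyWord l * zyWord l' := by
  simp [zyWord]

lemma span_range_zyWord : Submodule.span ℚ (Set.range zyWord) = ⊤ := by
  have hadjoin : Algebra.adjoin ℚ {Hz, Hy} = ⊤ := by
    rw [eq_top_iff, ← FreeAlgebra.adjoin_range_ι, Algebra.adjoin_le_iff]
    have hz : Hz ∈ Algebra.adjoin ℚ {Hz, Hy} := Algebra.subset_adjoin (by simp)
    have hy : Hy ∈ Algebra.adjoin ℚ {Hz, Hy} := Algebra.subset_adjoin (by simp)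
    rintro _ ⟨_ | _, rfl⟩
    · simpa [Hz, Hx] using Subalgebra.sub_mem _ hz hy
    · exact hy
  have hclosure : (Submonoid.closure {Hz, Hy} : Set H) ⊆ Set.range zyWord := by
    intro w hw
    induction hw using Submonoid.closure_induction with
    | mem w hw =>
      rcases hw with rfl | rfl
      exacts [⟨[false], mul_one _⟩, ⟨[true], mul_one _⟩]
    | one => exact ⟨[], rfl⟩
    | mul _ _ _ _ ha hb =>
      obtain ⟨l, rfl⟩ := ha
      obtain ⟨l', rfl⟩ := hb
      exact ⟨l ++ l', zyWord_append l l'⟩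
  rw [eq_top_iff, ← Algebra.top_toSubmodule, ← hadjoin, Algebra.adjoin_eq_span]
  exact Submodule.span_mono hclosure

lemma zyWord_induction {p : H → Prop} (word : ∀ l, p (zyWord l))
    (add : ∀ a b, p a → p b → p (a + b)) (smul : ∀ (r : ℚ) a, p a → p (r • a)) (w : H) :
    p w := by
  have hw : w ∈ Submodule.span ℚ (Set.range zyWord) := span_range_zyWord ▸ Submodule.mem_top
  induction hw using Submodule.span_induction with
  | mem _ h => obtain ⟨l, rfl⟩ := h; exact word l
  | zero => simpa using smul 0 _ (word [])
  | add a b _ _ ha hb => exact add a b ha hb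
  | smul r a _ ha => exact smul r a ha

namespace IsDiamond

variable {d : H →ₗ[ℚ] H →ₗ[ℚ] H}

lemma Hz_mul_left (hd : IsDiamond d) (A B : H) : d (Hz * A) B = Hz * d A B := by
  obtain ⟨h1, -, hxx, hxy, hyx, hyy⟩ := hd
  induction B using zyWord_induction with
  | add a b ha hb => simp only [map_add, ha, hb, mul_add]
  | smul r a ha => simp only [map_smul, ha, mul_smul_comm]
  | word l =>
    rcases l with _ | ⟨_ | _, l⟩
    · simp [h1]
    · simp only [zyWord_cons_false, Hz, add_mul, map_add, LinearMap.add_apply, hxx, hxy, hyx, hyy]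
      noncomm_ring
    · simp only [zyWord_cons_true, Hz, add_mul, map_add, LinearMap.add_apply, hxy, hyy]
      noncomm_ring

lemma Hx_mul_left (hd : IsDiamond d) (A B : H) : d (Hx * A) B = Hz * d A B - d (Hy * A) B := by
  rw [← hd.Hz_mul_left, Hz, add_mul, map_add, LinearMap.add_apply, add_sub_cancel_right]

lemma Hz_mul_right (hd : IsDiamond d) (A B : H) : d A (Hz * B) = Hz * d A B := by
  induction A using zyWord_induction with
  | add a b ha hb => simp only [map_add, LinearMap.add_apply, ha, hb, mul_add]
  | smul r a ha => simp only [map_smul, LinearMap.smul_apply, ha, mul_smul_comm]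
  | word l =>
    induction l generalizing B with
    | nil => simp [hd.2.1]
    | cons b l ih =>
      obtain ⟨-, -, -, -, hyx, hyy⟩ := id hd
      cases b
      · simp only [zyWord_cons_false, hd.Hz_mul_left, ih]
      · have ih' : d (zyWord l) (Hx * B) = Hz * d (zyWord l) B - d (zyWord l) (Hy * B) := by
          rw [← ih, Hz, add_mul, map_add, add_sub_cancel_right]
        rw [zyWord_cons_true, Hz, add_mul, map_add, hyx, hyy, ih', hd.Hx_mul_left, Hz]
        noncomm_ring

lemma Hy_mul_Hy_mul (hd : IsDiamond d) (A B : H) :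
    d (Hy * A) (Hy * B) = Hy * (d A (Hy * B) + d (Hy * A) B - Hz * d A B) := by
  obtain ⟨-, -, -, -, -, hyy⟩ := id hd
  rw [hyy, hd.Hx_mul_left]
  noncomm_ring

lemma zyWord_comm (hd : IsDiamond d) (l₁ l₂ : List Bool) :
    d (zyWord l₁) (zyWord l₂) = d (zyWord l₂) (zyWord l₁) := by
  induction l₁ generalizing l₂ with
  | nil => simp [hd.1, hd.2.1]
  | cons b₁ t₁ ih₁ =>
    induction l₂ with
    | nil => simp [hd.1, hd.2.1]
    | cons b₂ t₂ ih₂ =>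
      rcases b₁ with _ | _
      · simp only [zyWord_cons_false, hd.Hz_mul_left, hd.Hz_mul_right, ih₁]
      rcases b₂ with _ | _
      · simp only [zyWord_cons_false, zyWord_cons_true, hd.Hz_mul_left, hd.Hz_mul_right] at ih₂ ⊢
        rw [ih₂]
      have h₁ : d (zyWord t₁) (Hy * zyWord t₂) = d (Hy * zyWord t₂) (zyWord t₁) :=
        ih₁ (true :: t₂)
      simp only [zyWord_cons_true, hd.Hy_mul_Hy_mul] at ih₂ ⊢
      rw [h₁, ih₁ t₂, ih₂, add_comm (d (Hy * zyWord t₂) _)]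

lemma assoc_Hy_mul (hd : IsDiamond d) (A B C : H)
    -- `hᵢ…` is associativity with the leading `y` removed from the arguments `i…`
    (h₁ : d (d A (Hy * B)) (Hy * C) = d A (d (Hy * B) (Hy * C)))
    (h₂ : d (d (Hy * A) B) (Hy * C) = d (Hy * A) (d B (Hy * C)))
    (h₃ : d (d (Hy * A) (Hy * B)) C = d (Hy * A) (d (Hy * B) C))
    (h₁₂ : d (d A B) (Hy * C) = d A (d B (Hy * C)))
    (h₁₃ : d (d A (Hy * B)) C = d A (d (Hy * B) C))
    (h₂₃ : d (d (Hy * A) B) C = d (Hy * A) (d B C))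
    (h₁₂₃ : d (d A B) C = d A (d B C)) :
    d (d (Hy * A) (Hy * B)) (Hy * C) = d (Hy * A) (d (Hy * B) (Hy * C)) := by
  set U := d A (Hy * B) + d (Hy * A) B - Hz * d A B with hU
  set V := d B (Hy * C) + d (Hy * B) C - Hz * d B C with hV
  have hAB : d (Hy * A) (Hy * B) = Hy * U := hd.Hy_mul_Hy_mul A B
  have hBC : d (Hy * B) (Hy * C) = Hy * V := hd.Hy_mul_Hy_mul B C
  rw [hAB, hBC, hd.Hy_mul_Hy_mul, hd.Hy_mul_Hy_mul, ← hAB, h₃, ← hBC]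
  simp only [hU, hV, map_add, map_sub, LinearMap.add_apply, LinearMap.sub_apply,
    hd.Hz_mul_left, hd.Hz_mul_right, h₁, h₂, h₁₂, h₁₃, h₂₃, h₁₂₃]
  noncomm_ring

lemma zyWord_assoc (hd : IsDiamond d) (l₁ l₂ l₃ : List Bool) :
    d (d (zyWord l₁) (zyWord l₂)) (zyWord l₃) = d (zyWord l₁) (d (zyWord l₂) (zyWord l₃)) := by
  induction l₁ generalizing l₂ l₃ with
  | nil => simp [hd.2.1]
  | cons b₁ t₁ ih₁ =>
  induction l₂ generalizing l₃ with
  | nil => simp [hd.1, hd.2.1]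
  | cons b₂ t₂ ih₂ =>
  induction l₃ with
  | nil => simp [hd.1]
  | cons b₃ t₃ ih₃ =>
  rcases b₁ with _ | _
  · simp only [zyWord_cons_false, hd.Hz_mul_left, ih₁]
  rcases b₂ with _ | _
  · simp only [zyWord_cons_false, zyWord_cons_true, hd.Hz_mul_left, hd.Hz_mul_right] at ih₂ ⊢
    rw [ih₂]
  rcases b₃ with _ | _
  · simp only [zyWord_cons_false, zyWord_cons_true, hd.Hz_mul_right] at ih₃ ⊢
    rw [ih₃]
  exact hd.assoc_Hy_mul _ _ _ (ih₁ (true :: t₂) (true :: t₃)) (ih₂ (true :: t₃)) ih₃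
    (ih₁ t₂ (true :: t₃)) (ih₁ (true :: t₂) t₃) (ih₂ t₃) (ih₁ t₂ t₃)

lemma comm (hd : IsDiamond d) (A B : H) : d A B = d B A := by
  have h : d = d.flip := LinearMap.ext_on_range span_range_zyWord fun l₁ =>
    LinearMap.ext_on_range span_range_zyWord fun l₂ => hd.zyWord_comm l₁ l₂
  exact LinearMap.congr_fun₂ h A B

lemma assoc (hd : IsDiamond d) (A B C : H) : d (d A B) C = d A (d B C) := by
  have h : d.compr₂ d = ((LinearMap.llcomp ℚ H H H).comp d).compl₂ d :=
    LinearMap.ext_on_range span_range_zyWord fun l₁ =>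
      LinearMap.ext_on_range span_range_zyWord fun l₂ =>
        LinearMap.ext_on_range span_range_zyWord fun l₃ => hd.zyWord_assoc l₁ l₂ l₃
  exact LinearMap.congr_fun (LinearMap.congr_fun₂ h A B) C

end IsDiamond

/-- The product `◇` on `ℌ` is associative and commutative. -/
theorem statement7 (d : H →ₗ[ℚ] H →ₗ[ℚ] H) (hd : IsDiamond d) (w1 w2 w3 : H) :
    d (d w1 w2) w3 = d w1 (d w2 w3) ∧ d w1 w2 = d w2 w1 :=
  ⟨hd.assoc w1 w2 w3, hd.comm w1 w2⟩

end
end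

section
/- Let (a_n)_{n≥1} and (b_n)_{n≥1} be real sequences such that the Dirichlet series L1(s) = ∑_{n≥1} a_n/n^s and L2(s) = ∑_{n≥1} b_n/n^s converge for every integer s ≥ 0 and L1(s) + s·L2(s) = 0 holds for every integer s ≥ 0. Then a_n = 0 and b_n = 0 for all n ≥ 1. -/
open scoped BigOperators

noncomputable section

/-!
Induct on `n`, assuming `a k = b k = 0` for `k < n`. Bounded coefficients make the series
absolutely convergent for `s ≥ 2`, and after multiplying by `(n + 1) ^ s` everything beyond the
`n`-th term is `O(((n + 1) / (n + 2)) ^ s)`. So `u s = (n + 1) ^ s L₁(s)` and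
`v s = (n + 1) ^ s L₂(s)` approach `a n` and `b n` faster than `1 / s`. Since `u s + s v s = 0`,
`s v s → -a n`, hence `s b n` converges, so `b n = 0`; then `s v s → 0` and `a n = 0`.
-/

open Filter Topology

lemma tendsto_zero_of_tendsto_sum_range {G : Type*} [TopologicalSpace G] [AddCommGroup G]
    [IsTopologicalAddGroup G] {f : ℕ → G} {l : G}
    (h : Tendsto (fun N => ∑ n ∈ Finset.range N, f n) atTop (𝓝 l)) :
    Tendsto f atTop (𝓝 0) := by
  have h' := ((tendsto_add_atTop_iff_nat 1).mpr h).sub h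
  simpa only [Finset.sum_range_succ, add_sub_cancel_left, sub_self] using h'

lemma tendsto_zero_of_tendsto_nat_mul {f : ℕ → ℝ} {l : ℝ}
    (h : Tendsto (fun s : ℕ => (s : ℝ) * f s) atTop (𝓝 l)) :
    Tendsto f atTop (𝓝 0) := by
  have h' := tendsto_one_div_atTop_nhds_zero_nat.mul h
  rw [zero_mul] at h'
  refine h'.congr' ?_
  filter_upwards [eventually_ge_atTop 1] with s hs
  have : (s : ℝ) ≠ 0 := by positivity
  field_simp

lemma eq_zero_of_add_nat_mul_eq_zero {u v : ℕ → ℝ} {α β : ℝ}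
    (huv : ∀ s : ℕ, u s + s * v s = 0)
    (hu : Tendsto (fun s : ℕ => (s : ℝ) * (u s - α)) atTop (𝓝 0))
    (hv : Tendsto (fun s : ℕ => (s : ℝ) * (v s - β)) atTop (𝓝 0)) :
    α = 0 ∧ β = 0 := by
  have hu_lim : Tendsto u atTop (𝓝 α) :=
    tendsto_sub_nhds_zero_iff.mp (tendsto_zero_of_tendsto_nat_mul hu)
  have hsv : Tendsto (fun s : ℕ => (s : ℝ) * v s) atTop (𝓝 (-α)) := by
    simpa only [eq_neg_of_add_eq_zero_right (huv _)] using hu_lim.neg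
  have hsβ : Tendsto (fun s : ℕ => (s : ℝ) * β) atTop (𝓝 (-α)) := by
    simpa only [mul_sub, sub_sub_cancel, sub_zero] using hsv.sub hv
  have hβ : β = 0 :=
    tendsto_nhds_unique tendsto_const_nhds (tendsto_zero_of_tendsto_nat_mul hsβ)
  subst hβ
  simp only [sub_zero] at hv
  exact ⟨neg_eq_zero.mp (tendsto_nhds_unique hsv hv), rfl⟩

section DirichletSeries

variable {a : ℕ → ℝ} {M : ℝ} {n s : ℕ}

lemma DSConv.exists_abs_le {L : ℝ} (h : DSConv a 0 L) : ∃ M, ∀ k, |a k| ≤ M := by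
  simp only [DSConv, pow_zero, div_one] at h
  obtain ⟨M, hM⟩ := (tendsto_zero_of_tendsto_sum_range h).abs.bddAbove_range
  exact ⟨M, fun k => hM ⟨k, rfl⟩⟩

lemma summable_one_div_nat_add_pow_two (c : ℕ) :
    Summable (fun k : ℕ => 1 / ((k : ℝ) + c) ^ 2) := by
  simpa only [Nat.cast_add] using
    (summable_nat_add_iff c).mpr (Real.summable_one_div_nat_pow.mpr one_lt_two)

lemma summable_div_pow_of_abs_le (hM : ∀ k, |a k| ≤ M) (hs : 2 ≤ s) :
    Summable (fun k => a k / ((k : ℝ) + 1) ^ s) := by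
  refine .of_norm_bounded ((summable_one_div_nat_add_pow_two 1).mul_left M) fun k => ?_
  have hk : (1 : ℝ) ≤ (k : ℝ) + 1 := by simp
  rw [Real.norm_eq_abs, abs_div, abs_of_pos (by positivity : (0 : ℝ) < ((k : ℝ) + 1) ^ s),
    Nat.cast_one, mul_one_div]
  exact div_le_div₀ ((abs_nonneg _).trans (hM k)) (hM k) (by positivity)
    (pow_le_pow_right₀ hk hs)

lemma DSConv.eq_tsum {L : ℝ} (h : DSConv a s L)
    (hsum : Summable (fun k => a k / ((k : ℝ) + 1) ^ s)) :
    L = ∑' k, a k / ((k : ℝ) + 1) ^ s :=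
  tendsto_nhds_unique h hsum.hasSum.tendsto_sum_nat

lemma pow_mul_tsum_div_pow_sub_eq (ha : ∀ k < n, a k = 0)
    (hsum : Summable (fun k => a k / ((k : ℝ) + 1) ^ s)) :
    ((n : ℝ) + 1) ^ s * ∑' k, a k / ((k : ℝ) + 1) ^ s - a n =
      ∑' k : ℕ, a (k + (n + 1)) * (((n : ℝ) + 1) / ((k : ℝ) + (n + 2))) ^ s := by
  have head : ∑ k ∈ Finset.range n, a k / ((k : ℝ) + 1) ^ s = 0 :=
    Finset.sum_eq_zero fun k hk => by rw [ha k (Finset.mem_range.mp hk), zero_div]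
  rw [← hsum.sum_add_tsum_nat_add (n + 1), Finset.sum_range_succ, head, zero_add, mul_add,
    mul_div_cancel₀ _ (by positivity), add_sub_cancel_left, ← tsum_mul_left]
  congr 1 with k
  rw [div_pow]
  push_cast
  ring

lemma abs_pow_mul_tsum_div_pow_sub_le (hM : ∀ k, |a k| ≤ M) (ha : ∀ k < n, a k = 0)
    (hs : 2 ≤ s) :
    |((n : ℝ) + 1) ^ s * ∑' k, a k / ((k : ℝ) + 1) ^ s - a n| ≤
      M * ((n : ℝ) + 2) ^ 2 * (∑' k : ℕ, 1 / ((k : ℝ) + (n + 2)) ^ 2) *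
        (((n : ℝ) + 1) / ((n : ℝ) + 2)) ^ s := by
  have hM0 : 0 ≤ M := (abs_nonneg _).trans (hM 0)
  have hS := summable_one_div_nat_add_pow_two (n + 2)
  push_cast at hS
  rw [pow_mul_tsum_div_pow_sub_eq ha (summable_div_pow_of_abs_le hM hs), ← Real.norm_eq_abs]
  refine tsum_of_norm_bounded ((hS.hasSum.mul_left _).mul_right _) fun k => ?_
  set y : ℝ := ((n : ℝ) + 2) / ((k : ℝ) + (n + 2))
  have hy : y ≤ 1 := (div_le_one (by positivity)).mpr (by simp)
  have hsplit : ((n : ℝ) + 1) / ((k : ℝ) + (n + 2)) = ((n : ℝ) + 1) / ((n : ℝ) + 2) * y := by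
    simp only [y]
    field_simp
  calc ‖a (k + (n + 1)) * (((n : ℝ) + 1) / ((k : ℝ) + (n + 2))) ^ s‖
      = |a (k + (n + 1))| * ((((n : ℝ) + 1) / ((n : ℝ) + 2)) ^ s * y ^ s) := by
        rw [hsplit, norm_mul, Real.norm_eq_abs, norm_pow, Real.norm_of_nonneg (by positivity),
          mul_pow]
    _ ≤ M * ((((n : ℝ) + 1) / ((n : ℝ) + 2)) ^ s * y ^ 2) := by
        gcongr ?_ * (_ * ?_)
        · exact hM _
        · exact pow_le_pow_of_le_one (by positivity) hy hs
    _ = M * ((n : ℝ) + 2) ^ 2 * (1 / ((k : ℝ) + (n + 2)) ^ 2) *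
          (((n : ℝ) + 1) / ((n : ℝ) + 2)) ^ s := by
        simp only [y, div_pow]
        ring

lemma tendsto_nat_mul_pow_mul_sub_of_dsConv {L : ℕ → ℝ} (hL : ∀ s, DSConv a s (L s))
    (ha : ∀ k < n, a k = 0) :
    Tendsto (fun s : ℕ => (s : ℝ) * (((n : ℝ) + 1) ^ s * L s - a n)) atTop (𝓝 0) := by
  obtain ⟨M, hM⟩ := (hL 0).exists_abs_le
  set C := M * ((n : ℝ) + 2) ^ 2 * ∑' k : ℕ, 1 / ((k : ℝ) + (n + 2)) ^ 2
  set r := ((n : ℝ) + 1) / ((n : ℝ) + 2)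
  have hr : r < 1 := (div_lt_one (by positivity)).mpr (by linarith)
  have hlim := (tendsto_self_mul_const_pow_of_lt_one (by positivity) hr).const_mul C
  rw [mul_zero] at hlim
  refine squeeze_zero_norm' ?_ hlim
  filter_upwards [eventually_ge_atTop 2] with s hs
  rw [(hL s).eq_tsum (summable_div_pow_of_abs_le hM hs), norm_mul, Real.norm_natCast,
    Real.norm_eq_abs]
  calc (s : ℝ) * |((n : ℝ) + 1) ^ s * ∑' k, a k / ((k : ℝ) + 1) ^ s - a n|
      ≤ s * (C * r ^ s) := by gcongr; exact abs_pow_mul_tsum_div_pow_sub_le hM ha hs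
    _ = C * (s * r ^ s) := by ring

end DirichletSeries

/-- If the Dirichlet series `L₁(s) = ∑_{n≥1} a_n/n^s` and
`L₂(s) = ∑_{n≥1} b_n/n^s` converge for every integer `s ≥ 0` and
`L₁(s) + s·L₂(s) = 0` for every integer `s ≥ 0`, then all `a_n` and `b_n` vanish. -/
theorem statement11 (a b : ℕ → ℝ)
    (h : ∀ s : ℕ, ∃ L1 L2 : ℝ,
      DSConv a s L1 ∧ DSConv b s L2 ∧ L1 + (s : ℝ) * L2 = 0) :
    ∀ n, a n = 0 ∧ b n = 0 := by
  choose L1 L2 h1 h2 h3 using h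
  intro n
  induction n using Nat.strong_induction_on with
  | _ n ih =>
  refine eq_zero_of_add_nat_mul_eq_zero (u := fun s => ((n : ℝ) + 1) ^ s * L1 s)
    (v := fun s => ((n : ℝ) + 1) ^ s * L2 s) (fun s => ?_)
    (tendsto_nat_mul_pow_mul_sub_of_dsConv h1 fun k hk => (ih k hk).1)
    (tendsto_nat_mul_pow_mul_sub_of_dsConv h2 fun k hk => (ih k hk).2)
  linear_combination ((n : ℝ) + 1) ^ s * h3 s

end
end
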